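/- For every z ∈ ℂ∖[−1,1], the value w = J₊⁻¹(z) satisfies w² − 2zw + 1 = 0 (equivalently (w + w⁻¹)/2 = z, with w ≠ 0) and |w| < 1; that is, J₊⁻¹ maps the slit plane ℂ∖[−1,1] into the open unit disk and is a right inverse of the Joukowsky transform J(w) = (w + w⁻¹)/2. -/

import Mathlib

open Filter Set

/-- The inverse Joukowsky transform mapping the slit plane to the unit disk,
`J₊⁻¹(z) = z - (z-1)^{1/2} (z+1)^{1/2}` with principal-branch square roots. -/
noncomputable def Jinv (z : ℂ) : ℂ :=
  z - (z - 1) ^ ((1 : ℂ) / 2) * (z + 1) ^ ((1 : ℂ) / 2)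

/-!
Write `a = (z-1)^{1/2}`, `b = (z+1)^{1/2}`. Then `J₊⁻¹(z) = z - ab` and `z + ab` are the two roots
of `w² - 2zw + 1`, so their product is `1`; moreover `(b ∓ a)² = 2(z ∓ ab)`. Principal square roots
lie in the closed right half-plane, and since `z - 1` and `z + 1` have the same imaginary part,
`a` and `b` have imaginary parts of the same sign. Hence `Re(a b̄) ≥ 0`, i.e. `|b - a| ≤ |b + a|`,
so `|J₊⁻¹(z)| ≤ |z + ab|` and therefore `|J₊⁻¹(z)| ≤ 1`. Equality would force `J₊⁻¹(z)⁻¹` to be its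
conjugate, making `z = Re J₊⁻¹(z)` a point of `[-1, 1]`.
-/

open Complex

noncomputable def joukowsky (w : ℂ) : ℂ := (w + w⁻¹) / 2

theorem joukowsky_eq_of_sq_sub_mul_add_one_eq_zero {w z : ℂ} (h : w ^ 2 - 2 * z * w + 1 = 0) :
    joukowsky w = z := by
  have hw : w ≠ 0 := by
    rintro rfl
    norm_num at h
  rw [joukowsky]
  field_simp
  linear_combination h

theorem joukowsky_eq_re_of_norm_eq_one {w : ℂ} (h : ‖w‖ = 1) : joukowsky w = w.re := by
  have hnormSq : normSq w = 1 := by rw [normSq_eq_norm_sq, h, one_pow]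
  rw [joukowsky, inv_def, hnormSq, inv_one, ofReal_one, mul_one, add_conj]
  push_cast
  ring

theorem mul_im_cpow_inv_two_nonneg {u v : ℂ} (h : u.im = v.im) :
    0 ≤ (u ^ (2⁻¹ : ℂ)).im * (v ^ (2⁻¹ : ℂ)).im := by
  rcases le_or_gt 0 u.im with hu | hu
  · rw [cpow_inv_two_im_eq_sqrt hu, cpow_inv_two_im_eq_sqrt (h ▸ hu)]
    positivity
  · rw [cpow_inv_two_im_eq_neg_sqrt hu, cpow_inv_two_im_eq_neg_sqrt (h ▸ hu), neg_mul_neg]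
    positivity

theorem norm_cpow_inv_two_sub_le_norm_add {u v : ℂ} (h : u.im = v.im) :
    ‖v ^ (2⁻¹ : ℂ) - u ^ (2⁻¹ : ℂ)‖ ≤ ‖v ^ (2⁻¹ : ℂ) + u ^ (2⁻¹ : ℂ)‖ := by
  have hre : 0 ≤ (u ^ (2⁻¹ : ℂ)).re * (v ^ (2⁻¹ : ℂ)).re := by
    rw [cpow_inv_two_re, cpow_inv_two_re]
    positivity
  have him := mul_im_cpow_inv_two_nonneg h
  rw [← sq_le_sq₀ (norm_nonneg _) (norm_nonneg _), Complex.sq_norm, Complex.sq_norm, normSq_apply, normSq_apply]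
  simp only [sub_re, sub_im, add_re, add_im]
  nlinarith

section Jinv

variable (z : ℂ)

theorem Jinv_eq : Jinv z = z - (z - 1) ^ (2⁻¹ : ℂ) * (z + 1) ^ (2⁻¹ : ℂ) := by
  rw [Jinv, one_div]

theorem Jinv_mul_eq_one : Jinv z * (z + (z - 1) ^ (2⁻¹ : ℂ) * (z + 1) ^ (2⁻¹ : ℂ)) = 1 := by
  rw [Jinv_eq]
  linear_combination (-((z + 1) ^ (2⁻¹ : ℂ)) ^ 2) * cpow_ofNat_inv_pow (z - 1) 2 -
    (z - 1) * cpow_ofNat_inv_pow (z + 1) 2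

theorem Jinv_sq_sub_mul_add_one : Jinv z ^ 2 - 2 * z * Jinv z + 1 = 0 := by
  rw [Jinv_eq]
  linear_combination ((z + 1) ^ (2⁻¹ : ℂ)) ^ 2 * cpow_ofNat_inv_pow (z - 1) 2 +
    (z - 1) * cpow_ofNat_inv_pow (z + 1) 2

theorem norm_Jinv_le_one : ‖Jinv z‖ ≤ 1 := by
  set a := (z - 1) ^ (2⁻¹ : ℂ)
  set b := (z + 1) ^ (2⁻¹ : ℂ)
  have ha : a ^ 2 = z - 1 := cpow_ofNat_inv_pow _ 2
  have hb : b ^ 2 = z + 1 := cpow_ofNat_inv_pow _ 2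
  have hsub : ‖Jinv z‖ = ‖b - a‖ ^ 2 / 2 := by
    have : (b - a) ^ 2 = 2 * Jinv z := by rw [Jinv_eq]; linear_combination ha + hb
    rw [← norm_pow, this, norm_mul, RCLike.norm_ofNat]
    ring
  have hadd : ‖z + a * b‖ = ‖b + a‖ ^ 2 / 2 := by
    have : (b + a) ^ 2 = 2 * (z + a * b) := by linear_combination ha + hb
    rw [← norm_pow, this, norm_mul, RCLike.norm_ofNat]
    ring
  have hle : ‖Jinv z‖ ≤ ‖z + a * b‖ := by
    rw [hsub, hadd]
    gcongr
    exact norm_cpow_inv_two_sub_le_norm_add (by simp)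
  have hprod : ‖Jinv z‖ * ‖z + a * b‖ = 1 := by rw [← norm_mul, Jinv_mul_eq_one, norm_one]
  nlinarith [norm_nonneg (Jinv z)]

end Jinv

/-- On the slit plane `ℂ∖[-1,1]`, `w = J₊⁻¹(z)` is a nonzero point of the
open unit disk satisfying `w² - 2zw + 1 = 0`, equivalently `(w + w⁻¹)/2 = z`; thus `J₊⁻¹`
is a right inverse of the Joukowsky transform `J(w) = (w + w⁻¹)/2` mapping into the
unit disk. -/
theorem Jinv_maps_slit_plane_to_disk (z : ℂ)
    (hz : z ∉ Complex.ofReal '' Set.Icc (-1 : ℝ) 1) :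
    Jinv z ≠ 0 ∧
    (Jinv z) ^ 2 - 2 * z * Jinv z + 1 = 0 ∧
    (Jinv z + (Jinv z)⁻¹) / 2 = z ∧
    ‖Jinv z‖ < 1 := by
  have hquad := Jinv_sq_sub_mul_add_one z
  have hJ : joukowsky (Jinv z) = z := joukowsky_eq_of_sq_sub_mul_add_one_eq_zero hquad
  refine ⟨left_ne_zero_of_mul_eq_one (Jinv_mul_eq_one z), hquad, hJ,
    (norm_Jinv_le_one z).lt_of_ne fun hnorm ↦ hz ⟨(Jinv z).re, ?_, ?_⟩⟩
  · exact abs_le.mp (hnorm ▸ abs_re_le_norm (Jinv z))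
  · rw [← joukowsky_eq_re_of_norm_eq_one hnorm, hJ]
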